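/- Fix integers 1 ≤ r ≤ n and a real c > 0, and set δ = 2^{n-1} − c·√(2^{n-1}·binom(n,r)·ln 2). If g : F_2^n → F_2 satisfies wt(g) ≥ 2^{n-r}, then P(B_δ(0) ∩ B_δ(g)) ≤ 2^{−c²·binom(n,r)/(1 − 2^{−r})}, where P(B_δ(0) ∩ B_δ(g)) = #{f : wt(f) ≤ δ and d(f,g) ≤ δ} / 2^{2^n}. -/

import Mathlib

/-- Boolean functions on `𝔽₂ⁿ`, identified with binary words of length `2^n`. -/
abbrev BF (n : ℕ) := (Fin n → ZMod 2) → ZMod 2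

/-- The uniform probability of a set of Boolean functions: `P(A) = #A / 2^{2^n}`. -/
noncomputable def Pr (n : ℕ) (S : Set (BF n)) : ℝ :=
  (Nat.card S : ℝ) / 2 ^ (2 ^ n)

/-- `B_δ(g)`, the Hamming ball of centre `g` and radius `δ`. -/
def ball (n : ℕ) (g : BF n) (δ : ℝ) : Set (BF n) :=
  {f | (hammingDist f g : ℝ) ≤ δ}

/-- `δ = 2^{n-1} − c·√(2^{n-1}·binom(n,r)·ln 2)`. -/
noncomputable def rmδ (r : ℕ) (c : ℝ) (n : ℕ) : ℝ :=
  2 ^ (n - 1) - c * Real.sqrt (2 ^ (n - 1) * (n.choose r) * Real.log 2)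



open Finset in
lemma key1 {n : ℕ} (g f : BF n) :
    hammingNorm g + 2 * #{x | g x = 0 ∧ f x ≠ 0} ≤ hammingNorm f + hammingDist f g := by
  classical
  have hpt : ∀ a b : ZMod 2,
      ((if a ≠ 0 then 1 else 0) + 2 * (if a = 0 ∧ b ≠ 0 then 1 else 0) : ℕ)
        ≤ (if b ≠ 0 then 1 else 0) + (if b ≠ a then 1 else 0) := by decide
  simp only [hammingNorm, hammingDist, Finset.card_filter]
  calc (∑ x, if g x ≠ 0 then 1 else 0) + 2 * ∑ x, (if g x = 0 ∧ f x ≠ 0 then 1 else 0)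
      = ∑ x : Fin n → ZMod 2, ((if g x ≠ 0 then 1 else 0) + 2 * (if g x = 0 ∧ f x ≠ 0 then 1 else 0)) := by
        rw [Finset.mul_sum, Finset.sum_add_distrib]
    _ ≤ ∑ x : Fin n → ZMod 2, ((if f x ≠ 0 then 1 else 0) + (if f x ≠ g x then 1 else 0)) :=
        Finset.sum_le_sum fun x _ => hpt (g x) (f x)
    _ = _ := by rw [Finset.sum_add_distrib]

open Finset

lemma fiber_card {X : Type*} [Fintype X] [DecidableEq X] (Y : Finset X) (h0 : X → ZMod 2) :
    #{f : X → ZMod 2 | ∀ x ∈ Y, f x = h0 x} = 2 ^ (Fintype.card X - Y.card) := by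
  classical
  have : #{f : X → ZMod 2 | ∀ x ∈ Y, f x = h0 x}
      = (Finset.univ : Finset ({x // x ∉ Y} → ZMod 2)).card := by
    apply Finset.card_bij' (fun f _ => fun x : {x // x ∉ Y} => f x.1)
      (fun u _ => fun x => if hx : x ∈ Y then h0 x else u ⟨x, hx⟩)
    · intro f hf
      simp
    · intro u hu
      simp only [Finset.mem_filter, Finset.mem_univ, true_and]
      intro x hx
      simp [hx]
    · intro f hf
      simp only [Finset.mem_filter, Finset.mem_univ, true_and] at hf
      funext x
      by_cases hx : x ∈ Y <;> simp [hx, hf x]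
    · intro u hu
      funext x
      simp [x.2]
  rw [this, Finset.card_univ, Fintype.card_fun]
  have h1 : Fintype.card {x // x ∉ Y} = Fintype.card X - Y.card := by
    simp [Fintype.card_subtype_compl]
  simp [h1, Fintype.card_subtype_compl]

lemma key2 {X : Type*} [Fintype X] [DecidableEq X] (Y : Finset X) (m : ℕ) :
    #{f : X → ZMod 2 | #{x ∈ Y | f x ≠ 0} ≤ m}
      ≤ (∑ k ∈ Finset.range (m+1), Y.card.choose k) * 2 ^ (Fintype.card X - Y.card) := by
  classical
  set S : Finset (Finset X) := (Finset.range (m+1)).biUnion (fun k => Y.powersetCard k) with hS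
  have hmem : ∀ f ∈ ({f : X → ZMod 2 | #{x ∈ Y | f x ≠ 0} ≤ m} : Finset _),
      ({x ∈ Y | f x ≠ 0} : Finset X) ∈ S := by
    intro f hf
    simp only [Finset.mem_filter, Finset.mem_univ, true_and] at hf
    simp only [hS, Finset.mem_biUnion, Finset.mem_range, Finset.mem_powersetCard]
    exact ⟨#{x ∈ Y | f x ≠ 0}, Nat.lt_succ_of_le hf, Finset.filter_subset _ _, rfl⟩
  rw [Finset.card_eq_sum_card_fiberwise hmem]
  have hfib : ∀ A ∈ S,
      #{f ∈ ({f : X → ZMod 2 | #{x ∈ Y | f x ≠ 0} ≤ m} : Finset _) | ({x ∈ Y | f x ≠ 0} : Finset X) = A}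
        ≤ 2 ^ (Fintype.card X - Y.card) := by
    intro A hA
    rw [← fiber_card Y (fun x => if x ∈ A then 1 else 0)]
    apply Finset.card_le_card
    intro f hf
    simp only [Finset.mem_filter, Finset.mem_univ, true_and] at hf ⊢
    intro x hx
    have : (f x ≠ 0) ↔ x ∈ A := by
      rw [← hf.2]
      simp [hx]
    have h2 : ∀ a : ZMod 2, a ≠ 0 → a = 1 := by decide
    by_cases hxA : x ∈ A
    · simp [hxA, h2 (f x) (this.mpr hxA)]
    · simp only [hxA, if_neg]
      by_contra hne
      exact hxA (this.mp hne)
  calc ∑ A ∈ S, _ ≤ ∑ A ∈ S, 2 ^ (Fintype.card X - Y.card) := Finset.sum_le_sum hfib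
    _ = S.card * 2 ^ (Fintype.card X - Y.card) := by rw [Finset.sum_const, smul_eq_mul]
    _ = (∑ k ∈ Finset.range (m+1), Y.card.choose k) * 2 ^ (Fintype.card X - Y.card) := by
        congr 1
        rw [hS, Finset.card_biUnion]
        · exact Finset.sum_congr rfl fun k _ => Finset.card_powersetCard k Y
        · intro i hi j hj hij
          apply Finset.disjoint_left.mpr
          intro A hAi hAj
          rw [Finset.mem_powersetCard] at hAi hAj
          exact hij (hAi.2 ▸ hAj.2)

open Finset Real

lemma key3 (N m : ℕ) (t : ℝ) (ht : 0 < t) (hm : (m:ℝ) ≤ N/2 - t) :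
    (∑ k ∈ Finset.range (m+1), (N.choose k : ℝ)) ≤ 2 ^ N * Real.exp (-2 * t^2 / N) := by
  have hm0 : (0:ℝ) ≤ m := Nat.cast_nonneg m
  have hN0 : (0:ℝ) < N := by nlinarith
  have hmN : m ≤ N := by
    have : (m:ℝ) ≤ N := by nlinarith
    exact_mod_cast this
  set s : ℝ := 4 * t / N with hs
  have hs0 : 0 < s := by positivity
  set x : ℝ := Real.exp (-s) with hx
  have hx0 : 0 < x := Real.exp_pos _
  have hx1 : x ≤ 1 := Real.exp_le_one_iff.mpr (by linarith)
  -- step 1: sum ≤ (x+1)^N / x^m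
  have step1 : (∑ k ∈ Finset.range (m+1), (N.choose k : ℝ)) * x ^ m ≤ (x + 1) ^ N := by
    calc (∑ k ∈ Finset.range (m+1), (N.choose k : ℝ)) * x ^ m
        = ∑ k ∈ Finset.range (m+1), (N.choose k : ℝ) * x ^ m := by rw [Finset.sum_mul]
      _ ≤ ∑ k ∈ Finset.range (m+1), (N.choose k : ℝ) * x ^ k := by
          apply Finset.sum_le_sum
          intro k hk
          have hkm : k ≤ m := Nat.lt_succ_iff.mp (Finset.mem_range.mp hk)
          have := pow_le_pow_of_le_one hx0.le hx1 hkm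
          have hc0 : (0:ℝ) ≤ (N.choose k : ℝ) := Nat.cast_nonneg _
          nlinarith
      _ ≤ ∑ k ∈ Finset.range (N+1), (N.choose k : ℝ) * x ^ k := by
          apply Finset.sum_le_sum_of_subset_of_nonneg
          · exact Finset.range_subset_range.mpr (by omega)
          · intro k _ _; positivity
      _ = (x + 1) ^ N := by
          rw [add_pow]
          apply Finset.sum_congr rfl
          intro k _
          ring
  -- step 2: (x+1)^N ≤ 2^N * exp(-2t²/N - s*m)
  have hcosh : x + 1 ≤ 2 * Real.exp (s^2/8 - s/2) := by
    have h1 : x + 1 = 2 * Real.exp (-s/2) * Real.cosh (s/2) := by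
      rw [Real.cosh_eq, hx]
      have e1 : Real.exp (-s) = Real.exp (-s/2) * Real.exp (-(s/2)) := by
        rw [← Real.exp_add]; ring_nf
      have e2 : (1:ℝ) = Real.exp (-s/2) * Real.exp (s/2) := by
        rw [← Real.exp_add, show -s/2 + s/2 = 0 by ring, Real.exp_zero]
      linear_combination e1 + e2
    have h2 : Real.cosh (s/2) ≤ Real.exp ((s/2)^2 / 2) := Real.cosh_le_exp_half_sq _
    rw [h1]
    calc 2 * Real.exp (-s/2) * Real.cosh (s/2) ≤ 2 * Real.exp (-s/2) * Real.exp ((s/2)^2/2) := by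
          have : (0:ℝ) < 2 * Real.exp (-s/2) := by positivity
          nlinarith [Real.cosh_pos (s/2)]
      _ = 2 * Real.exp (s^2/8 - s/2) := by
          rw [mul_assoc, ← Real.exp_add]
          ring_nf
  have step2 : (x + 1) ^ N ≤ 2 ^ N * Real.exp (-2 * t^2 / N - s * m) := by
    calc (x + 1) ^ N ≤ (2 * Real.exp (s^2/8 - s/2)) ^ N := by
          apply pow_le_pow_left₀ (by positivity) hcosh
      _ = 2 ^ N * Real.exp (N * (s^2/8 - s/2)) := by
          rw [mul_pow, ← Real.exp_nat_mul]
      _ ≤ 2 ^ N * Real.exp (-2 * t^2 / N - s * m) := by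
          apply mul_le_mul_of_nonneg_left _ (by positivity)
          apply Real.exp_le_exp.mpr
          have hsm : s * m ≤ s * (N/2 - t) := by
            apply mul_le_mul_of_nonneg_left hm hs0.le
          have key : (N:ℝ) * (s^2/8 - s/2) = -2*t^2/N - s*(N/2 - t) := by
            rw [hs]; field_simp; ring
          linarith [hsm, key.le, key.ge]
  -- combine
  have hxm : (0:ℝ) < x ^ m := by positivity
  rw [← mul_le_mul_iff_of_pos_right hxm]
  calc (∑ k ∈ Finset.range (m+1), (N.choose k : ℝ)) * x ^ m ≤ (x+1)^N := step1
    _ ≤ 2 ^ N * Real.exp (-2 * t^2 / N - s * m) := step2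
    _ = (2 ^ N * Real.exp (-2 * t^2 / N)) * x ^ m := by
        rw [hx, ← Real.exp_nat_mul, mul_assoc, ← Real.exp_add]
        ring_nf

theorem stmt6 (n r : ℕ) (hr : 1 ≤ r) (hrn : r ≤ n) (c : ℝ) (hc : 0 < c) (g : BF n)
    (hg : 2 ^ (n - r) ≤ hammingNorm g) :
    Pr n (ball n 0 (rmδ r c n) ∩ ball n g (rmδ r c n)) ≤
      (2 : ℝ) ^ (-(c ^ 2 * (n.choose r : ℝ) / (1 - (2 : ℝ) ^ (-(r : ℝ))))) := by
  classical
  have hn1 : 1 ≤ n := le_trans hr hrn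
  set δ := rmδ r c n with hδ
  set t : ℝ := c * Real.sqrt (2 ^ (n-1) * (n.choose r : ℝ) * Real.log 2) with htdef
  have hlog2 : 0 < Real.log 2 := Real.log_pos (by norm_num)
  have hCpos : 0 < n.choose r := Nat.choose_pos hrn
  have hCposR : (0:ℝ) < (n.choose r : ℝ) := by exact_mod_cast hCpos
  have ht : 0 < t := by
    apply mul_pos hc
    apply Real.sqrt_pos.mpr
    positivity
  have hδt : δ = 2 ^ (n-1) - t := rfl
  set w := hammingNorm g with hw
  set Y : Finset (Fin n → ZMod 2) := ({x | g x = 0} : Finset _) with hY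
  set N' := Y.card with hN'def
  have hXcard : Fintype.card (Fin n → ZMod 2) = 2 ^ n := by
    simp [Fintype.card_fun]
  have hNw : N' + w = 2 ^ n := by
    rw [hN'def, hw, hY, hammingNorm, ← hXcard, ← Finset.card_univ]
    exact Finset.card_filter_add_card_filter_not _
  have hN'le : N' ≤ 2 ^ n := by omega
  -- membership consequence
  have hball : ∀ f ∈ ball n 0 δ ∩ ball n g δ, (#{x ∈ Y | f x ≠ 0} : ℝ) ≤ δ - w / 2 := by
    intro f hf
    obtain ⟨h1, h2⟩ := hf
    simp only [ball, Set.mem_setOf_eq] at h1 h2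
    rw [hammingDist_zero_right] at h1
    have hb := key1 g f
    have hfilter : ({x ∈ Y | f x ≠ 0} : Finset _) = ({x | g x = 0 ∧ f x ≠ 0} : Finset _) := by
      rw [hY, Finset.filter_filter]
    rw [hfilter]
    have hcast : (w:ℝ) + 2 * (#{x | g x = 0 ∧ f x ≠ 0} : ℝ)
        ≤ (hammingNorm f : ℝ) + (hammingDist f g : ℝ) := by exact_mod_cast hb
    linarith
  set μ : ℝ := δ - w / 2 with hμdef
  rcases lt_or_ge μ 0 with hμ | hμ
  · -- empty intersection
    have hT : ball n 0 δ ∩ ball n g δ = ∅ := by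
      ext f
      simp only [Set.mem_empty_iff_false, iff_false]
      intro hf
      have := hball f hf
      have hnn : (0:ℝ) ≤ (#{x ∈ Y | f x ≠ 0} : ℝ) := Nat.cast_nonneg _
      linarith
    rw [hT]
    have : Pr n ∅ = 0 := by simp [Pr]
    rw [this]
    positivity
  · set m := ⌊μ⌋₊ with hm
    have hμm : (m:ℝ) ≤ μ := Nat.floor_le hμ
    set F : Finset (BF n) := ({f : BF n | #{x ∈ Y | f x ≠ 0} ≤ m} : Finset _) with hF
    have hsub : ball n 0 δ ∩ ball n g δ ⊆ (↑F : Set (BF n)) := by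
      intro f hf
      simp only [hF, Finset.coe_filter, Set.mem_setOf_eq, Finset.mem_univ, true_and]
      exact Nat.le_floor (hball f hf)
    have hcard1 : Nat.card (ball n 0 δ ∩ ball n g δ : Set (BF n)) ≤ F.card := by
      have h := Nat.card_mono (Set.toFinite (↑F : Set (BF n))) hsub
      rw [Nat.card_coe_set_eq (↑F : Set (BF n)), Set.ncard_coe_finset] at h
      exact h
    have hcard2 : F.card ≤ (∑ k ∈ Finset.range (m+1), N'.choose k) * 2 ^ (2^n - N') := by
      have := key2 Y m
      rwa [hXcard] at this
    -- real threshold for key3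
    have h2n : (2:ℝ)^n = 2 * 2^(n-1) := by
      rw [← pow_succ']
      congr 1
      omega
    have hN'real : (N':ℝ) = 2^n - w := by
      have : (N':ℝ) + w = 2^n := by exact_mod_cast hNw
      linarith
    have hμeq : μ = (N':ℝ)/2 - t := by
      rw [hμdef, hδt, hN'real]
      push_cast
      rw [h2n]
      ring
    have hmN' : (m:ℝ) ≤ (N':ℝ)/2 - t := by rw [← hμeq]; exact hμm
    have hN'pos : (0:ℝ) < N' := by
      have : (0:ℝ) ≤ m := Nat.cast_nonneg _
      linarith
    have htail := key3 N' m t ht hmN'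
    -- assemble Pr bound
    have hPr : Pr n (ball n 0 δ ∩ ball n g δ) ≤ Real.exp (-2 * t^2 / N') := by
      rw [Pr]
      rw [div_le_iff₀ (by positivity)]
      calc (Nat.card (ball n 0 δ ∩ ball n g δ : Set (BF n)) : ℝ)
          ≤ ((∑ k ∈ Finset.range (m+1), N'.choose k) * 2 ^ (2^n - N') : ℕ) := by
            exact_mod_cast le_trans hcard1 hcard2
        _ = (∑ k ∈ Finset.range (m+1), (N'.choose k : ℝ)) * 2 ^ (2^n - N') := by push_cast; ring
        _ ≤ (2 ^ N' * Real.exp (-2 * t^2 / N')) * 2 ^ (2^n - N') :=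
            mul_le_mul_of_nonneg_right htail (by positivity)
        _ = Real.exp (-2 * t^2 / N') * 2 ^ (2^n) := by
            rw [show (2:ℝ)^(2^n) = 2^N' * 2^(2^n - N') by rw [← pow_add]; congr 1; omega]
            ring
    refine le_trans hPr ?_
    -- final exponent comparison
    have hA : (2:ℝ) ^ (-(r:ℝ)) = ((2:ℝ)^(r:ℕ))⁻¹ := by
      rw [← Real.rpow_natCast 2 r, ← Real.rpow_neg (by norm_num)]
    have hApos : (0:ℝ) < 1 - (2:ℝ) ^ (-(r:ℝ)) := by
      rw [hA]
      have h2r : (2:ℝ) ≤ 2^(r:ℕ) := by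
        calc (2:ℝ) = 2^(1:ℕ) := by norm_num
          _ ≤ 2^(r:ℕ) := pow_le_pow_right₀ (by norm_num) hr
      have : ((2:ℝ)^(r:ℕ))⁻¹ < 1 := by
        rw [inv_lt_one_iff₀]; right; linarith
      linarith
    have ht2 : t^2 = c^2 * (2^(n-1) * (n.choose r : ℝ) * Real.log 2) := by
      rw [htdef, mul_pow, Real.sq_sqrt (by positivity)]
    have hwr : ((2:ℝ)^(n-r) : ℝ) ≤ (w:ℝ) := by exact_mod_cast hg
    have hsplit : (2:ℝ)^(n-r) * 2^(r:ℕ) = 2^n := by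
      rw [← pow_add]; congr 1; omega
    -- N' ≤ (1 - 2^{-r}) * 2^n
    have hN'A : (N':ℝ) ≤ (1 - (2:ℝ) ^ (-(r:ℝ))) * 2^n := by
      rw [hN'real, hA]
      have h2rpos : (0:ℝ) < 2^(r:ℕ) := by positivity
      have : ((2:ℝ)^(r:ℕ))⁻¹ * 2^n = 2^(n-r) := by
        field_simp
        linarith [hsplit]
      rw [sub_mul, one_mul, this]
      linarith
    rw [Real.rpow_def_of_pos (by norm_num : (0:ℝ) < 2)]
    apply Real.exp_le_exp.mpr
    have h2t2 : 2 * t^2 = c^2 * (n.choose r : ℝ) * Real.log 2 * 2^n := by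
      rw [ht2, h2n]; ring
    have hkey : (c^2 * (n.choose r:ℝ) * Real.log 2) / (1 - (2:ℝ)^(-(r:ℝ))) ≤ 2*t^2/(N':ℝ) := by
      rw [div_le_div_iff₀ hApos hN'pos, h2t2]
      have hKpos : (0:ℝ) < c^2 * (n.choose r:ℝ) * Real.log 2 := by positivity
      calc c^2*(n.choose r:ℝ)*Real.log 2 * N'
          ≤ c^2*(n.choose r:ℝ)*Real.log 2 * ((1 - (2:ℝ)^(-(r:ℝ)))*2^n) :=
            mul_le_mul_of_nonneg_left hN'A hKpos.le
        _ = c^2*(n.choose r:ℝ)*Real.log 2*2^n*(1-(2:ℝ)^(-(r:ℝ))) := by ring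
    have e1 : Real.log 2 * -(c ^ 2 * (n.choose r : ℝ) / (1 - (2:ℝ) ^ (-(r:ℝ))))
        = -((c^2 * (n.choose r:ℝ) * Real.log 2) / (1 - (2:ℝ)^(-(r:ℝ)))) := by ring
    have e2 : -2 * t^2 / (N':ℝ) = -(2*t^2/(N':ℝ)) := by ring
    rw [e1, e2]
    linarith
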